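/- arXiv:2504.18098 — 2 statements merged into one kernel-verified Lean document; each statement's English description precedes it below -/
import Mathlib

section
/- W_α is a genuine witness of magic for mixed states: if ρ is an n-qubit state and W_α(ρ) > 0 for some real α ≥ 1/2 with α ≠ 1, then ρ is not a mixed stabilizer state, i.e. ρ cannot be written as a finite convex combination of projectors onto pure stabilizer states. -/
open Matrix Complex BigOperators
open scoped ComplexOrder

noncomputable section

/-- Index type for `n` qubits: functions `Fin n → Fin 2` (cardinality `2^n`). -/
abbrev QIdx (n : ℕ) := Fin n → Fin 2

/-- The four single-qubit Pauli matrices: `σ⁰ = I`, `σ¹ = σˣ`, `σ² = σᶻ`, `σ³ = σʸ`. -/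
def pauliMat : Fin 4 → Matrix (Fin 2) (Fin 2) ℂ
  | 0 => 1
  | 1 => !![0, 1; 1, 0]
  | 2 => !![1, 0; 0, -1]
  | 3 => !![0, -Complex.I; Complex.I, 0]

/-- The Pauli string `σ^{a_1} ⊗ ⋯ ⊗ σ^{a_n}` as a `2^n × 2^n` matrix. -/
def pauliString {n : ℕ} (a : Fin n → Fin 4) : Matrix (QIdx n) (QIdx n) ℂ :=
  fun i j => ∏ k, pauliMat (a k) (i k) (j k)

/-- An `n`-qubit state: positive semidefinite with unit trace. -/
def IsState {n : ℕ} (ρ : Matrix (QIdx n) (QIdx n) ℂ) : Prop :=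
  ρ.PosSemidef ∧ ρ.trace = 1

/-- The `α`-moment of the Pauli spectrum `A_α(ρ) = 2^{-n} ∑_P |tr(ρP)|^{2α}`. -/
def Amom {n : ℕ} (α : ℝ) (ρ : Matrix (QIdx n) (QIdx n) ℂ) : ℝ :=
  ((2:ℝ)^n)⁻¹ * ∑ a : Fin n → Fin 4, ‖(ρ * pauliString a).trace‖ ^ (2 * α)

/-- The 2-Rényi entropy `S₂(ρ) = -ln tr(ρ²)`. -/
def S2 {n : ℕ} (ρ : Matrix (QIdx n) (QIdx n) ℂ) : ℝ :=
  - Real.log ((ρ * ρ).trace.re)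

/-- The magic witness `W_α(ρ) = (1/(1-α)) ln A_α(ρ) - ((1-2α)/(1-α)) S₂(ρ)`. -/
def Wit {n : ℕ} (α : ℝ) (ρ : Matrix (QIdx n) (QIdx n) ℂ) : ℝ :=
  (1 / (1 - α)) * Real.log (Amom α ρ) - ((1 - 2*α)/(1 - α)) * S2 ρ

/-- The stabilizer norm `D(ρ) = A_{1/2}(ρ) = 2^{-n} ∑_P |tr(ρP)|`. -/
def Dnorm {n : ℕ} (ρ : Matrix (QIdx n) (QIdx n) ℂ) : ℝ :=
  Amom (1/2) ρ

/-- A Clifford unitary: unitary mapping every Pauli string to `±` a Pauli string. -/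
def IsCliffordUnitary {n : ℕ} (U : Matrix (QIdx n) (QIdx n) ℂ) : Prop :=
  U ∈ Matrix.unitaryGroup (QIdx n) ℂ ∧
    ∀ a : Fin n → Fin 4, ∃ (b : Fin n → Fin 4) (ε : ℝ),
      (ε = 1 ∨ ε = -1) ∧ U * pauliString a * Uᴴ = (ε : ℂ) • pauliString b

/-- The computational all-zeros basis vector `|0⟩^{⊗n}`. -/
def zeroVec (n : ℕ) : QIdx n → ℂ :=
  fun i => if (∀ k, i k = 0) then 1 else 0

/-- A pure stabilizer state vector: `U|0⟩^{⊗n}` for a Clifford unitary `U`. -/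
def IsPureStab {n : ℕ} (ψ : QIdx n → ℂ) : Prop :=
  ∃ U, IsCliffordUnitary U ∧ ψ = U.mulVec (zeroVec n)

/-- The rank-one projector `|ψ⟩⟨ψ|`. -/
def proj {n : ℕ} (ψ : QIdx n → ℂ) : Matrix (QIdx n) (QIdx n) ℂ :=
  Matrix.vecMulVec ψ (star ψ)

/-- A mixed stabilizer state: a finite convex combination of pure stabilizer projectors. -/
def IsMixedStab {n : ℕ} (ρ : Matrix (QIdx n) (QIdx n) ℂ) : Prop :=
  ∃ (k : ℕ) (p : Fin k → ℝ) (ψ : Fin k → QIdx n → ℂ),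
    (∀ i, 0 ≤ p i) ∧ (∑ i, p i = 1) ∧ (∀ i, IsPureStab (ψ i)) ∧
    ρ = ∑ i, (p i : ℂ) • proj (ψ i)

/-- The set of values `ln ∑ᵢ |xᵢ|` over finite real stabilizer decompositions of `ρ`. -/
def StabDecomps {n : ℕ} (ρ : Matrix (QIdx n) (QIdx n) ℂ) : Set ℝ :=
  { r | ∃ (k : ℕ) (x : Fin k → ℝ) (ψ : Fin k → QIdx n → ℂ),
      (∀ i, IsPureStab (ψ i)) ∧ ρ = ∑ i, (x i : ℂ) • proj (ψ i) ∧
      r = Real.log (∑ i, |x i|) }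

/-- The log-free robustness of magic. -/
def LR {n : ℕ} (ρ : Matrix (QIdx n) (QIdx n) ℂ) : ℝ := sInf (StabDecomps ρ)

open Classical in
/-- Positive-semidefinite square root (junk value `0` off the PSD cone). -/
def psdSqrt {n : ℕ} (A : Matrix (QIdx n) (QIdx n) ℂ) : Matrix (QIdx n) (QIdx n) ℂ :=
  if h : A.PosSemidef then
    (h.1.eigenvectorUnitary : Matrix (QIdx n) (QIdx n) ℂ) *
      diagonal ((↑) ∘ Real.sqrt ∘ h.1.eigenvalues) *
      (star h.1.eigenvectorUnitary : Matrix (QIdx n) (QIdx n) ℂ)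
  else 0

/-- The Uhlmann fidelity `F(ρ,σ) = (tr √(√ρ σ √ρ))²`. -/
def fidelity {n : ℕ} (ρ σ : Matrix (QIdx n) (QIdx n) ℂ) : ℝ :=
  ((psdSqrt (psdSqrt ρ * σ * psdSqrt ρ)).trace.re) ^ 2

/-- The stabilizer fidelity `D_F(ρ) = inf { -ln F(ρ,σ) : σ a mixed stabilizer state }`. -/
def DF {n : ℕ} (ρ : Matrix (QIdx n) (QIdx n) ℂ) : ℝ :=
  sInf { r | ∃ σ, IsMixedStab σ ∧ r = - Real.log (fidelity ρ σ) }

/-- Filtered Pauli moment `Ã_α(ρ) = (2^n A_α(ρ) - 1)/(2^n - 1)`. -/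
def Atil {n : ℕ} (α : ℝ) (ρ : Matrix (QIdx n) (QIdx n) ℂ) : ℝ :=
  ((2:ℝ)^n * Amom α ρ - 1) / ((2:ℝ)^n - 1)

/-- Filtered stabilizer norm `D̃(ρ) = (2^n D(ρ) - 1)/(2^n - 1)`. -/
def Dtil {n : ℕ} (ρ : Matrix (QIdx n) (QIdx n) ℂ) : ℝ :=
  ((2:ℝ)^n * Dnorm ρ - 1) / ((2:ℝ)^n - 1)

/-- Filtered magic witness `W̃_α(ρ) = (1/(1-α)) ln Ã_α(ρ) + ((1-2α)/(1-α)) ln Ã₁(ρ)`. -/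
def Wtil {n : ℕ} (α : ℝ) (ρ : Matrix (QIdx n) (QIdx n) ℂ) : ℝ :=
  (1/(1-α)) * Real.log (Atil α ρ) + ((1 - 2*α)/(1-α)) * Real.log (Atil 1 ρ)

/-- The maximally mixed state `I/2^n`. -/
def maxMixed (n : ℕ) : Matrix (QIdx n) (QIdx n) ℂ := ((2:ℂ)^n)⁻¹ • 1

/-- The single-qubit T-state vector `|T⟩ = (|0⟩ + e^{-iπ/4}|1⟩)/√2`. -/
def Tket : QIdx 1 → ℂ :=
  fun i => if i 0 = 0 then (Real.sqrt 2 : ℂ)⁻¹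
           else Complex.exp (-(Real.pi/4 : ℂ) * Complex.I) * (Real.sqrt 2 : ℂ)⁻¹

/-- The depolarized T-state `ρ_p = (1-p)|T⟩⟨T| + p·I₂/2`. -/
def rhoDep (p : ℝ) : Matrix (QIdx 1) (QIdx 1) ℂ :=
  ((1 - p : ℝ) : ℂ) • proj Tket + ((p : ℝ) : ℂ) • (((2:ℂ))⁻¹ • 1)

/-!
For a mixed stabilizer state the Pauli spectrum `x_P = |tr(ρP)|` satisfies `∑_P x_P ≤ 2^n`: a
Clifford conjugation permutes the Pauli strings up to sign, so every pure stabilizer state has the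
same spectrum sum `2^n` as `|0⟩⟨0|`, and the bound passes to convex combinations. Parseval for the
Pauli basis gives `∑_P x_P² = 2^n tr ρ²`. Hölder interpolation between these two moments yields
`A_α(ρ) ≤ (tr ρ²)^{2α-1}` for `1/2 ≤ α ≤ 1` and the reverse inequality for `α ≥ 1`; either way
`W_α(ρ) ≤ 0`.
-/

theorem sum_sum_prod_eq_prod_sum_sum {ι κ R : Type*} [Fintype ι] [DecidableEq ι] [Fintype κ]
    [CommSemiring R] (f : ι → κ → κ → R) :
    ∑ x : ι → κ, ∑ y : ι → κ, ∏ i, f i (x i) (y i) = ∏ i, ∑ u, ∑ v, f i u v := by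
  rw [Fintype.prod_sum]
  exact Finset.sum_congr rfl fun x _ => (Fintype.prod_sum fun i v => f i (x i) v).symm

theorem sum_pauliMat_apply_mul_apply (i j k l : Fin 2) :
    ∑ m, pauliMat m i j * pauliMat m k l = if i = l ∧ j = k then 2 else 0 := by
  fin_cases i <;> fin_cases j <;> fin_cases k <;> fin_cases l <;>
    norm_num [pauliMat, Fin.sum_univ_four, Matrix.one_apply, Complex.ext_iff]

theorem trace_pauliMat_mul_pauliMat (c d : Fin 4) :
    (pauliMat c * pauliMat d).trace = if c = d then 2 else 0 := by
  fin_cases c <;> fin_cases d <;>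
    norm_num [pauliMat, Matrix.trace_fin_two, Matrix.one_apply, Complex.ext_iff]

theorem pauliMat_conjTranspose (c : Fin 4) : (pauliMat c)ᴴ = pauliMat c := by
  fin_cases c <;> ext i j <;> fin_cases i <;> fin_cases j <;>
    simp [pauliMat]

section Pauli

variable {n : ℕ}

theorem pauliString_zero : pauliString (0 : Fin n → Fin 4) = 1 := by
  ext i j
  simp [pauliString, pauliMat, Matrix.one_apply, Fintype.prod_boole, funext_iff]

theorem pauliString_conjTranspose (a : Fin n → Fin 4) : (pauliString a)ᴴ = pauliString a := by
  ext i j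
  simp only [Matrix.conjTranspose_apply, pauliString, star_prod]
  exact Finset.prod_congr rfl fun k _ => congrFun₂ (pauliMat_conjTranspose (a k)) (i k) (j k)

theorem trace_pauliString_mul_pauliString (a b : Fin n → Fin 4) :
    (pauliString a * pauliString b).trace = if a = b then 2 ^ n else 0 := by
  calc (pauliString a * pauliString b).trace
      = ∑ x : QIdx n, ∑ y : QIdx n,
          ∏ k, pauliMat (a k) (x k) (y k) * pauliMat (b k) (y k) (x k) := by
        simp only [Matrix.trace, Matrix.diag, Matrix.mul_apply, pauliString,
          Finset.prod_mul_distrib]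
    _ = ∏ k, (pauliMat (a k) * pauliMat (b k)).trace := by
        rw [sum_sum_prod_eq_prod_sum_sum (fun k u v => pauliMat (a k) u v * pauliMat (b k) v u)]
        simp only [Matrix.trace, Matrix.diag, Matrix.mul_apply]
    _ = if a = b then 2 ^ n else 0 := by
        simp only [trace_pauliMat_mul_pauliMat, Fintype.prod_ite_zero, Finset.prod_const,
          Finset.card_univ, Fintype.card_fin, funext_iff]

theorem sum_pauliString_apply_mul_apply (x y z w : QIdx n) :
    ∑ a : Fin n → Fin 4, pauliString a x y * pauliString a z w
      = if x = w ∧ y = z then 2 ^ n else 0 := by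
  calc ∑ a : Fin n → Fin 4, pauliString a x y * pauliString a z w
      = ∏ k, ∑ c, pauliMat c (x k) (y k) * pauliMat c (z k) (w k) := by
        rw [Fintype.prod_sum]
        simp only [pauliString, Finset.prod_mul_distrib]
    _ = if x = w ∧ y = z then 2 ^ n else 0 := by
        simp only [sum_pauliMat_apply_mul_apply, Fintype.prod_ite_zero, Finset.prod_const,
          Finset.card_univ, Fintype.card_fin, funext_iff, forall_and]

theorem sum_trace_mul_pauliString_smul (A : Matrix (QIdx n) (QIdx n) ℂ) :
    ∑ a : Fin n → Fin 4, (A * pauliString a).trace • pauliString a = (2 ^ n : ℂ) • A := by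
  ext z w
  simp only [Matrix.sum_apply, Matrix.smul_apply, smul_eq_mul, Matrix.trace, Matrix.diag,
    Matrix.mul_apply, Finset.sum_mul]
  rw [Finset.sum_comm]
  simp only [Finset.sum_comm (γ := Fin n → Fin 4), mul_assoc, ← Finset.mul_sum,
    sum_pauliString_apply_mul_apply]
  simp [ite_and, Finset.sum_ite_eq', mul_comm]

theorem sum_trace_mul_pauliString_mul_trace (A B : Matrix (QIdx n) (QIdx n) ℂ) :
    ∑ a : Fin n → Fin 4, (A * pauliString a).trace * (B * pauliString a).trace
      = 2 ^ n * (A * B).trace := by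
  have h := congrArg (fun M => (B * M).trace) (sum_trace_mul_pauliString_smul A)
  simp only [Matrix.mul_sum, Matrix.trace_sum, Matrix.mul_smul, Matrix.trace_smul,
    smul_eq_mul] at h
  rw [Matrix.trace_mul_comm B A] at h
  simpa only [mul_comm] using h

end Pauli

section Stabilizer

variable {n : ℕ}

theorem Matrix.IsHermitian.sum_norm_trace_mul_pauliString_rpow_two
    {ρ : Matrix (QIdx n) (QIdx n) ℂ} (hρ : ρ.IsHermitian) :
    ∑ a : Fin n → Fin 4, ‖(ρ * pauliString a).trace‖ ^ (2 : ℝ) = 2 ^ n * (ρ * ρ).trace.re := by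
  have hreal : ∀ a, star (ρ * pauliString a).trace = (ρ * pauliString a).trace := fun a => by
    rw [← Matrix.trace_conjTranspose, Matrix.conjTranspose_mul, pauliString_conjTranspose,
      hρ.eq, Matrix.trace_mul_comm]
  have hsq : ∀ a, (ρ * pauliString a).trace * (ρ * pauliString a).trace
      = ((‖(ρ * pauliString a).trace‖ ^ (2 : ℝ) : ℝ) : ℂ) := fun a => by
    nth_rw 2 [← hreal a]
    rw [Complex.star_def, Complex.mul_conj', Real.rpow_two]
    push_cast; rfl
  have h := sum_trace_mul_pauliString_mul_trace ρ ρ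
  rw [show (2 : ℂ) ^ n = ((2 ^ n : ℝ) : ℂ) by push_cast; rfl] at h
  simp only [hsq, ← Complex.ofReal_sum] at h
  simpa only [Complex.ofReal_re, Complex.re_ofReal_mul] using congrArg Complex.re h

theorem trace_conj_mul_conj {m R : Type*} [Fintype m] [DecidableEq m] [CommRing R] [StarRing R]
    {U : Matrix m m R} (hU : Uᴴ * U = 1) (A B : Matrix m m R) :
    (U * A * Uᴴ * (U * B * Uᴴ)).trace = (A * B).trace := by
  have h : U * A * Uᴴ * (U * B * Uᴴ) = U * (A * B * Uᴴ) := by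
    simp only [Matrix.mul_assoc, ← Matrix.mul_assoc Uᴴ U, hU, Matrix.one_mul]
  rw [h, Matrix.trace_mul_comm, Matrix.mul_assoc, hU, Matrix.mul_one]

theorem IsCliffordUnitary.sum_norm_trace_conj_mul_pauliString {U : Matrix (QIdx n) (QIdx n) ℂ}
    (hU : IsCliffordUnitary U) (ρ : Matrix (QIdx n) (QIdx n) ℂ) :
    ∑ a : Fin n → Fin 4, ‖(U * ρ * Uᴴ * pauliString a).trace‖
      = ∑ a : Fin n → Fin 4, ‖(ρ * pauliString a).trace‖ := by
  obtain ⟨hUunit, hCl⟩ := hU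
  have hUU : Uᴴ * U = 1 := Matrix.mem_unitaryGroup_iff'.mp hUunit
  choose b ε hε hconj using hCl
  have hεsq : ∀ a, (ε a : ℂ) * ε a = 1 := fun a => by rcases hε a with h | h <;> simp [h]
  have hP : ∀ a, pauliString (b a) = (ε a : ℂ) • (U * pauliString a * Uᴴ) := fun a => by
    rw [hconj, smul_smul, hεsq, one_smul]
  have htrace : ∀ a A,
      (U * A * Uᴴ * pauliString (b a)).trace = (ε a : ℂ) * (A * pauliString a).trace := fun a A => by
    rw [hP, Matrix.mul_smul, Matrix.trace_smul, trace_conj_mul_conj hUU, smul_eq_mul]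
  have hb : Function.Injective b := by
    intro a a' hbb
    have h := htrace a' (pauliString a)
    rw [← hbb, htrace, trace_pauliString_mul_pauliString, trace_pauliString_mul_pauliString,
      if_pos rfl] at h
    by_contra hne
    rw [if_neg hne, mul_zero] at h
    rcases hε a with hεa | hεa <;> simp [hεa] at h
  calc ∑ a, ‖(U * ρ * Uᴴ * pauliString a).trace‖
      = ∑ a, ‖(U * ρ * Uᴴ * pauliString (b a)).trace‖ :=
        (Fintype.sum_bijective b (Finite.injective_iff_bijective.mp hb) _ _ fun _ => rfl).symm
    _ = ∑ a, ‖(ρ * pauliString a).trace‖ := by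
        refine Finset.sum_congr rfl fun a _ => ?_
        rw [htrace, norm_mul]
        rcases hε a with h | h <;> simp [h]

theorem proj_mulVec (U : Matrix (QIdx n) (QIdx n) ℂ) (v : QIdx n → ℂ) :
    proj (U *ᵥ v) = U * proj v * Uᴴ := by
  rw [proj, proj, Matrix.mul_vecMulVec, Matrix.vecMulVec_mul, Matrix.star_mulVec]

theorem proj_zeroVec : proj (zeroVec n) = Matrix.single 0 0 1 := by
  have h : zeroVec n = Pi.single 0 1 := by
    funext i
    simp [zeroVec, Pi.single_apply, funext_iff]
  rw [Matrix.single_eq_single_vecMulVec_single, proj, h, Pi.star_single, star_one]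

theorem sum_norm_trace_proj_zeroVec_mul_pauliString :
    ∑ a : Fin n → Fin 4, ‖(proj (zeroVec n) * pauliString a).trace‖ = 2 ^ n := by
  simp only [proj_zeroVec, Matrix.trace_single_mul, one_smul, pauliString, Pi.zero_apply,
    norm_prod]
  rw [← Fintype.prod_sum (fun (_ : Fin n) c => ‖pauliMat c 0 0‖)]
  norm_num [Fin.sum_univ_four, pauliMat]

theorem IsPureStab.sum_norm_trace_proj_mul_pauliString {ψ : QIdx n → ℂ} (h : IsPureStab ψ) :
    ∑ a : Fin n → Fin 4, ‖(proj ψ * pauliString a).trace‖ = 2 ^ n := by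
  obtain ⟨U, hU, rfl⟩ := h
  rw [proj_mulVec, hU.sum_norm_trace_conj_mul_pauliString,
    sum_norm_trace_proj_zeroVec_mul_pauliString]

theorem IsMixedStab.sum_norm_trace_mul_pauliString_le {ρ : Matrix (QIdx n) (QIdx n) ℂ}
    (h : IsMixedStab ρ) : ∑ a : Fin n → Fin 4, ‖(ρ * pauliString a).trace‖ ≤ 2 ^ n := by
  obtain ⟨k, p, ψ, hp0, hp1, hψ, rfl⟩ := h
  calc ∑ a, ‖((∑ i, (p i : ℂ) • proj (ψ i)) * pauliString a).trace‖
      ≤ ∑ a, ∑ i, p i * ‖(proj (ψ i) * pauliString a).trace‖ := by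
        refine Finset.sum_le_sum fun a _ => ?_
        simp only [Finset.sum_mul, Matrix.trace_sum, Matrix.smul_mul, Matrix.trace_smul]
        refine (norm_sum_le _ _).trans_eq (Finset.sum_congr rfl fun i _ => ?_)
        rw [norm_smul, Complex.norm_real, Real.norm_of_nonneg (hp0 i)]
    _ = ∑ i, p i * 2 ^ n := by
        rw [Finset.sum_comm]
        simp only [← Finset.mul_sum, (hψ _).sum_norm_trace_proj_mul_pauliString]
    _ = 2 ^ n := by rw [← Finset.sum_mul, hp1, one_mul]

end Stabilizer

theorem sum_rpow_one_add_le {ι : Type*} (s : Finset ι) {x : ι → ℝ} (hx : ∀ i, 0 ≤ x i)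
    {r p : ℝ} (hr : 0 ≤ r) (hp : 1 ≤ p) :
    ∑ i ∈ s, x i ^ (1 + r) ≤ (∑ i ∈ s, x i) ^ (1 - p⁻¹) * (∑ i ∈ s, x i ^ (1 + r * p)) ^ p⁻¹ := by
  have h := Real.inner_le_weight_mul_Lp_of_nonneg s hp x (fun i => x i ^ r) hx
    (fun i => Real.rpow_nonneg (hx i) r)
  have hmul : ∀ {e : ℝ}, 0 ≤ e → ∀ i, x i * x i ^ e = x i ^ (1 + e) := fun he i =>
    (Real.rpow_one_add' (hx i) (by linarith)).symm
  simp only [← Real.rpow_mul (hx _), hmul hr, hmul (mul_nonneg hr (zero_le_one.trans hp))] at h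
  exact h

theorem sum_rpow_le_mul_rpow {ι : Type*} (s : Finset ι) {x : ι → ℝ} (hx : ∀ i, 0 ≤ x i)
    {N t β : ℝ} (hN : 0 < N) (ht : 0 ≤ t) (hsum : ∑ i ∈ s, x i ≤ N)
    (hsq : ∑ i ∈ s, x i ^ (2 : ℝ) = N * t) (hβ1 : 1 ≤ β) (hβ2 : β ≤ 2) :
    ∑ i ∈ s, x i ^ β ≤ N * t ^ (β - 1) := by
  rcases hβ1.eq_or_lt with rfl | hβ1
  · simpa using hsum
  have hβ : β - 1 ≠ 0 := by linarith
  have h := sum_rpow_one_add_le s hx (r := β - 1) (p := (β - 1)⁻¹) (by linarith)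
    (one_le_inv₀ (by linarith) |>.mpr (by linarith))
  rw [mul_inv_cancel₀ hβ, inv_inv, add_sub_cancel, show (1 : ℝ) + 1 = 2 by norm_num, hsq] at h
  calc ∑ i ∈ s, x i ^ β
      ≤ (∑ i ∈ s, x i) ^ (1 - (β - 1)) * (N * t) ^ (β - 1) := h
    _ ≤ N ^ (1 - (β - 1)) * (N * t) ^ (β - 1) := by
        gcongr
        · exact Finset.sum_nonneg fun i _ => hx i
        · linarith
    _ = N * t ^ (β - 1) := by
        rw [Real.mul_rpow hN.le ht, ← mul_assoc, ← Real.rpow_add hN]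
        norm_num

theorem mul_rpow_le_sum_rpow {ι : Type*} (s : Finset ι) {x : ι → ℝ} (hx : ∀ i, 0 ≤ x i)
    {N t β : ℝ} (hN : 0 < N) (ht : 0 ≤ t) (hsum : ∑ i ∈ s, x i ≤ N)
    (hsq : ∑ i ∈ s, x i ^ (2 : ℝ) = N * t) (hβ : 2 ≤ β) :
    N * t ^ (β - 1) ≤ ∑ i ∈ s, x i ^ β := by
  have hβ1 : 0 < β - 1 := by linarith
  have h := sum_rpow_one_add_le s hx (r := 1) (p := β - 1) zero_le_one (by linarith)
  rw [one_mul, add_sub_cancel, show (1 : ℝ) + 1 = 2 by norm_num, hsq] at h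
  set S := ∑ i ∈ s, x i ^ β
  have hS : 0 ≤ S := Finset.sum_nonneg fun i _ => Real.rpow_nonneg (hx i) _
  have h' : N * t ≤ N ^ (1 - (β - 1)⁻¹) * S ^ (β - 1)⁻¹ :=
    h.trans (by
      gcongr
      · exact Finset.sum_nonneg fun i _ => hx i
      · exact sub_nonneg.mpr (inv_le_one_of_one_le₀ (by linarith)))
  have key : N ^ (β - 1)⁻¹ * t ≤ S ^ (β - 1)⁻¹ := by
    refine le_of_mul_le_mul_left ?_ (Real.rpow_pos_of_pos hN (1 - (β - 1)⁻¹))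
    rwa [← mul_assoc, ← Real.rpow_add hN, sub_add_cancel, Real.rpow_one]
  rw [Real.le_rpow_inv_iff_of_pos (by positivity) hS hβ1, Real.mul_rpow (by positivity) ht,
    Real.rpow_inv_rpow hN.le hβ1.ne'] at key
  exact key

section Moments

variable {n : ℕ} {ρ : Matrix (QIdx n) (QIdx n) ℂ}

theorem IsState.one_le_sum_norm_trace_mul_pauliString_rpow (hρ : IsState ρ) (r : ℝ) :
    1 ≤ ∑ a : Fin n → Fin 4, ‖(ρ * pauliString a).trace‖ ^ r := by
  have h0 : ‖(ρ * pauliString 0).trace‖ = 1 := by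
    rw [pauliString_zero, Matrix.mul_one, hρ.2, norm_one]
  calc (1 : ℝ) = ‖(ρ * pauliString 0).trace‖ ^ r := by rw [h0, Real.one_rpow]
    _ ≤ ∑ a : Fin n → Fin 4, ‖(ρ * pauliString a).trace‖ ^ r :=
        Finset.single_le_sum (f := fun a => ‖(ρ * pauliString a).trace‖ ^ r)
          (fun a _ => Real.rpow_nonneg (norm_nonneg _) r) (Finset.mem_univ (0 : Fin n → Fin 4))

theorem IsState.Amom_pos (hρ : IsState ρ) (α : ℝ) : 0 < Amom α ρ :=
  mul_pos (by positivity)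
    (one_pos.trans_le (hρ.one_le_sum_norm_trace_mul_pauliString_rpow (2 * α)))

theorem IsState.trace_mul_self_re_pos (hρ : IsState ρ) : 0 < (ρ * ρ).trace.re := by
  have h := hρ.one_le_sum_norm_trace_mul_pauliString_rpow 2
  rw [hρ.1.1.sum_norm_trace_mul_pauliString_rpow_two] at h
  exact pos_of_mul_pos_right (one_pos.trans_le h) (by positivity)

theorem IsMixedStab.Amom_le_rpow (hstab : IsMixedStab ρ) (hρ : IsState ρ) {α : ℝ}
    (hα : 1 / 2 ≤ α) (hα1 : α ≤ 1) : Amom α ρ ≤ (ρ * ρ).trace.re ^ (2 * α - 1) := by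
  rw [Amom, inv_mul_le_iff₀ (by positivity)]
  exact sum_rpow_le_mul_rpow _ (fun _ => norm_nonneg _) (by positivity)
    hρ.trace_mul_self_re_pos.le hstab.sum_norm_trace_mul_pauliString_le
    hρ.1.1.sum_norm_trace_mul_pauliString_rpow_two (by linarith) (by linarith)

theorem IsMixedStab.rpow_le_Amom (hstab : IsMixedStab ρ) (hρ : IsState ρ) {α : ℝ} (hα : 1 ≤ α) :
    (ρ * ρ).trace.re ^ (2 * α - 1) ≤ Amom α ρ := by
  rw [Amom, le_inv_mul_iff₀ (by positivity)]
  exact mul_rpow_le_sum_rpow _ (fun _ => norm_nonneg _) (by positivity)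
    hρ.trace_mul_self_re_pos.le hstab.sum_norm_trace_mul_pauliString_le
    hρ.1.1.sum_norm_trace_mul_pauliString_rpow_two (by linarith)

end Moments

/-- `W_α` is a genuine magic witness: if `W_α(ρ) > 0` for some
`α ≥ 1/2`, `α ≠ 1`, then `ρ` is not a mixed stabilizer state. -/
theorem witness_pos_implies_not_stab {n : ℕ} (ρ : Matrix (QIdx n) (QIdx n) ℂ)
    (hρ : IsState ρ) (α : ℝ) (hα : (1:ℝ)/2 ≤ α) (hα1 : α ≠ 1)
    (hW : 0 < Wit α ρ) : ¬ IsMixedStab ρ := by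
  intro hstab
  set t := (ρ * ρ).trace.re
  have ht : 0 < t := hρ.trace_mul_self_re_pos
  have hA : 0 < Amom α ρ := hρ.Amom_pos α
  have hα1' : 1 - α ≠ 0 := sub_ne_zero.mpr hα1.symm
  have hWit : Wit α ρ = (Real.log (Amom α ρ) - (2 * α - 1) * Real.log t) / (1 - α) := by
    rw [Wit, S2]
    field_simp
    ring
  rw [hWit] at hW
  rcases lt_or_gt_of_ne hα1 with hlt | hgt
  · have h := Real.log_le_log hA (hstab.Amom_le_rpow hρ hα hlt.le)
    rw [Real.log_rpow ht] at h
    exact (div_nonpos_of_nonpos_of_nonneg (by linarith) (by linarith)).not_gt hW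
  · have h := Real.log_le_log (Real.rpow_pos_of_pos ht _) (hstab.rpow_le_Amom hρ hgt.le)
    rw [Real.log_rpow ht] at h
    exact (div_nonpos_of_nonneg_of_nonpos (by linarith) (by linarith)).not_gt hW

end
end

section
/- The stabilizer fidelity is lower bounded by the log-free robustness of magic: for every n-qubit state ρ that admits at least one finite real decomposition into pure stabilizer projectors, D_F(ρ) ≤ LR(ρ). -/
open Matrix Complex BigOperators
open scoped ComplexOrder

noncomputable section

/-!
Write `ρ = ∑ xᵢ |ψᵢ⟩⟨ψᵢ|` and `S = ∑ |xᵢ|`. The mixed stabilizer state `σ = ∑ (|xᵢ|/S) |ψᵢ⟩⟨ψᵢ|`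
satisfies `ρ ≤ S σ`. Conjugating by `√ρ` gives `ρ²/S ≤ √ρ σ √ρ`, and operator monotonicity of the
square root gives `ρ/√S ≤ √(√ρ σ √ρ)`; taking traces, `F(ρ, σ) ≥ 1/S`, i.e. `-ln F(ρ, σ) ≤ ln S`.
-/

open scoped MatrixOrder

section SqrtConjugate

variable {N : Type*} [Fintype N] [DecidableEq N]

omit [DecidableEq N] in
lemma Matrix.re_trace_le_re_trace {A B : Matrix N N ℂ} (h : A ≤ B) : A.trace.re ≤ B.trace.re :=
  (Complex.le_def.mp ((tracePositiveLinearMap N ℝ ℂ).monotone' h)).1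

lemma Matrix.inv_smul_mul_self_le_sqrt_mul_mul_sqrt {ρ σ : Matrix N N ℂ} (hρ : 0 ≤ ρ) {c : ℝ}
    (hc : 0 < c) (h : ρ ≤ c • σ) :
    c⁻¹ • (ρ * ρ) ≤ CFC.sqrt ρ * σ * CFC.sqrt ρ := by
  have hsq : CFC.sqrt ρ * ρ * CFC.sqrt ρ = ρ * ρ := by
    nth_rw 2 [← CFC.sqrt_mul_sqrt_self ρ hρ]
    rw [← mul_assoc, mul_assoc, CFC.sqrt_mul_sqrt_self ρ hρ]
  have hconj := conjugate_le_conjugate_of_nonneg h (CFC.sqrt_nonneg ρ)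
  rw [hsq, mul_smul_comm, smul_mul_assoc] at hconj
  calc c⁻¹ • (ρ * ρ) ≤ c⁻¹ • c • (CFC.sqrt ρ * σ * CFC.sqrt ρ) :=
        smul_le_smul_of_nonneg_left hconj (inv_nonneg.mpr hc.le)
    _ = CFC.sqrt ρ * σ * CFC.sqrt ρ := inv_smul_smul₀ hc.ne' _

open scoped Matrix.Norms.L2Operator in
lemma Matrix.inv_sqrt_smul_le_sqrt_sqrt_mul_mul_sqrt {ρ σ : Matrix N N ℂ} (hρ : 0 ≤ ρ) {c : ℝ}
    (hc : 0 < c) (h : ρ ≤ c • σ) :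
    (√c)⁻¹ • ρ ≤ CFC.sqrt (CFC.sqrt ρ * σ * CFC.sqrt ρ) := by
  have hsmul : 0 ≤ (√c)⁻¹ • ρ := smul_nonneg (by positivity) hρ
  have hmul : (√c)⁻¹ • ρ * ((√c)⁻¹ • ρ) = c⁻¹ • (ρ * ρ) := by
    rw [smul_mul_smul_comm, ← mul_inv, Real.mul_self_sqrt hc.le]
  calc (√c)⁻¹ • ρ = CFC.sqrt ((√c)⁻¹ • ρ * ((√c)⁻¹ • ρ)) := (CFC.sqrt_mul_self _ hsmul).symm
    _ ≤ _ := CFC.sqrt_le_sqrt _ _ (hmul ▸ inv_smul_mul_self_le_sqrt_mul_mul_sqrt hρ hc h)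

end SqrtConjugate

section Fidelity

variable {n : ℕ}

lemma psdSqrt_eq_sqrt {A : Matrix (QIdx n) (QIdx n) ℂ} (hA : A.PosSemidef) :
    psdSqrt A = CFC.sqrt A := by
  rw [psdSqrt, dif_pos hA, CFC.sqrt_eq_real_sqrt A hA.nonneg, cfcₙ_eq_cfc, hA.1.cfc_eq,
    IsHermitian.cfc, Unitary.conjStarAlgAut_apply]
  rfl

lemma inv_le_fidelity_of_le_smul {ρ σ : Matrix (QIdx n) (QIdx n) ℂ} (hρ : IsState ρ) {c : ℝ}
    (hc : 0 < c) (h : ρ ≤ c • σ) : c⁻¹ ≤ fidelity ρ σ := by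
  have hconj : (CFC.sqrt ρ * σ * CFC.sqrt ρ).PosSemidef :=
    (smul_nonneg (inv_nonneg.mpr hc.le) hρ.1.isHermitian.isSelfAdjoint.mul_self_nonneg).trans
      (inv_smul_mul_self_le_sqrt_mul_mul_sqrt hρ.1.nonneg hc h) |>.posSemidef
  have htrace := re_trace_le_re_trace (inv_sqrt_smul_le_sqrt_sqrt_mul_mul_sqrt hρ.1.nonneg hc h)
  rw [trace_smul, hρ.2, Complex.real_smul, mul_one, Complex.ofReal_re] at htrace
  rw [fidelity, psdSqrt_eq_sqrt hρ.1, psdSqrt_eq_sqrt hconj]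
  calc c⁻¹ = ((√c)⁻¹) ^ 2 := by rw [inv_pow, Real.sq_sqrt hc.le]
    _ ≤ _ := pow_le_pow_left₀ (by positivity) htrace 2

end Fidelity

section StabilizerDecomposition

variable {n k : ℕ}

lemma star_zeroVec_dotProduct_zeroVec : star (zeroVec n) ⬝ᵥ zeroVec n = 1 := by
  classical
  rw [dotProduct, Finset.sum_eq_single (fun _ => 0)]
  · simp [zeroVec]
  · intro i _ hi
    have : ¬ ∀ k, i k = 0 := fun h => hi (funext h)
    simp [zeroVec, this]
  · simp

lemma IsPureStab.trace_proj {ψ : QIdx n → ℂ} (h : IsPureStab ψ) : (proj ψ).trace = 1 := by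
  obtain ⟨U, ⟨hU, -⟩, rfl⟩ := h
  have hUU : Uᴴ * U = 1 := (Matrix.mem_unitaryGroup_iff').mp hU
  rw [proj, trace_vecMulVec, star_mulVec, dotProduct_comm, dotProduct_mulVec, vecMul_vecMul,
    hUU, vecMul_one, star_zeroVec_dotProduct_zeroVec]

lemma sum_eq_one_of_eq_sum_smul_proj {ρ : Matrix (QIdx n) (QIdx n) ℂ} (htr : ρ.trace = 1)
    {x : Fin k → ℝ} {ψ : Fin k → QIdx n → ℂ} (hψ : ∀ i, IsPureStab (ψ i))
    (hρ : ρ = ∑ i, (x i : ℂ) • proj (ψ i)) : ∑ i, x i = 1 := by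
  have h := congrArg trace hρ
  simp only [htr, trace_sum, trace_smul, (hψ _).trace_proj, smul_eq_mul, mul_one] at h
  exact_mod_cast h.symm

def absMixture (x : Fin k → ℝ) (ψ : Fin k → QIdx n → ℂ) : Matrix (QIdx n) (QIdx n) ℂ :=
  ∑ i, ((|x i| / ∑ j, |x j| : ℝ) : ℂ) • proj (ψ i)

lemma isMixedStab_absMixture {x : Fin k → ℝ} {ψ : Fin k → QIdx n → ℂ}
    (hψ : ∀ i, IsPureStab (ψ i)) (hx : 0 < ∑ i, |x i|) : IsMixedStab (absMixture x ψ) :=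
  ⟨k, _, ψ, fun i => div_nonneg (abs_nonneg _) hx.le, by rw [← Finset.sum_div, div_self hx.ne'],
    hψ, rfl⟩

lemma sum_smul_proj_le_smul_absMixture {x : Fin k → ℝ} (hx : 0 < ∑ i, |x i|)
    (ψ : Fin k → QIdx n → ℂ) :
    ∑ i, (x i : ℂ) • proj (ψ i) ≤ (∑ i, |x i|) • absMixture x ψ := by
  have hscale : (∑ i, |x i|) • absMixture x ψ = ∑ i, ((|x i| : ℝ) : ℂ) • proj (ψ i) := by
    simp only [absMixture, Finset.smul_sum, ← Complex.coe_smul, smul_smul, ← Complex.ofReal_mul,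
      mul_div_cancel₀ _ hx.ne']
  rw [hscale, le_iff, ← Finset.sum_sub_distrib]
  refine posSemidef_sum _ fun i _ => ?_
  rw [← sub_smul, ← Complex.ofReal_sub]
  exact (posSemidef_vecMulVec_self_star (ψ i)).smul
    (by exact_mod_cast sub_nonneg.mpr (le_abs_self _))

end StabilizerDecomposition

lemma Real.sInf_le_of_mem_of_le {s : Set ℝ} {a b : ℝ} (ha : a ∈ s) (hab : a ≤ b) (hb : 0 ≤ b) :
    sInf s ≤ b := by
  -- in `ℝ`, the infimum of a set that is not bounded below is the junk value `0`
  by_cases hs : BddBelow s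
  · exact (csInf_le hs ha).trans hab
  · rwa [Real.sInf_of_not_bddBelow hs]

lemma DF_le_log_sum_abs {n k : ℕ} {ρ : Matrix (QIdx n) (QIdx n) ℂ} (hρ : IsState ρ)
    {x : Fin k → ℝ} {ψ : Fin k → QIdx n → ℂ} (hψ : ∀ i, IsPureStab (ψ i))
    (hρx : ρ = ∑ i, (x i : ℂ) • proj (ψ i)) : DF ρ ≤ Real.log (∑ i, |x i|) := by
  have hS : 1 ≤ ∑ i, |x i| := by
    calc 1 = |∑ i, x i| := by rw [sum_eq_one_of_eq_sum_smul_proj hρ.2 hψ hρx, abs_one]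
      _ ≤ ∑ i, |x i| := Finset.abs_sum_le_sum_abs _ _
  have hSpos : 0 < ∑ i, |x i| := one_pos.trans_le hS
  have hF := inv_le_fidelity_of_le_smul hρ hSpos (hρx ▸ sum_smul_proj_le_smul_absMixture hSpos ψ)
  refine Real.sInf_le_of_mem_of_le ⟨_, isMixedStab_absMixture hψ hSpos, rfl⟩ ?_
    (Real.log_nonneg hS)
  rw [neg_le, ← Real.log_inv]
  exact Real.log_le_log (inv_pos.mpr hSpos) hF

/-- the stabilizer fidelity is bounded by the log-free robustness
of magic: `D_F(ρ) ≤ LR(ρ)`. -/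
theorem stabFidelity_le_LR {n : ℕ} (ρ : Matrix (QIdx n) (QIdx n) ℂ)
    (hρ : IsState ρ) (hdec : (StabDecomps ρ).Nonempty) :
    DF ρ ≤ LR ρ :=
  le_csInf hdec fun _ ⟨_, _, _, hψ, hρx, hr⟩ => hr ▸ DF_le_log_sum_abs hρ hψ hρx

end
end
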